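/- arXiv:math/0106225 — 4 statements merged into one kernel-verified Lean document; each statement's English description precedes it below -/
import Mathlib

section
/- For integers 2 ≤ k ≤ a, one has ((a)_k / (k! * a))^{1/(k−1)} ≤ (a − 1)/2, where (a)_k = a(a−1)⋯(a−k+1). -/
lemma two_pow_le_fact (k : ℕ) (hk : 1 ≤ k) : 2 ^ (k - 1) ≤ Nat.factorial k := by
  induction k with
  | zero => simp
  | succ n ih =>
    cases Nat.eq_or_lt_of_le hk with
    | inl h => simp [← h]
    | inr h =>
      have hn : 1 ≤ n := Nat.lt_succ_iff.mp h
      have := ih hn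
      have : 2 ^ (n + 1 - 1) = 2 * 2 ^ (n - 1) := by
        rw [Nat.succ_sub_one, ← pow_succ']
        congr 1
        omega
      rw [this, Nat.factorial_succ]
      exact Nat.mul_le_mul (by omega) (ih hn)

lemma key_nat (a k : ℕ) (hk : 2 ≤ k) (hka : k ≤ a) :
    2 ^ (k - 1) * Nat.descFactorial a k ≤ Nat.factorial k * a * (a - 1) ^ (k - 1) := by
  obtain ⟨a', rfl⟩ : ∃ a', a = a' + 1 := ⟨a - 1, by omega⟩
  obtain ⟨k', rfl⟩ : ∃ k', k = k' + 1 := ⟨k - 1, by omega⟩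
  rw [Nat.succ_descFactorial_succ]
  simp only [Nat.add_sub_cancel]
  calc 2 ^ k' * ((a' + 1) * Nat.descFactorial a' k')
      ≤ Nat.factorial (k' + 1) * ((a' + 1) * a' ^ k') := by
        have h1 : 2 ^ k' ≤ Nat.factorial (k' + 1) := by
          simpa using two_pow_le_fact (k' + 1) (by omega)
        exact Nat.mul_le_mul h1
          (Nat.mul_le_mul_left _ (Nat.descFactorial_le_pow a' k'))
    _ = Nat.factorial (k' + 1) * (a' + 1) * a' ^ k' := by ring

theorem stmt_6 (a k : ℕ) (hk : 2 ≤ k) (hka : k ≤ a) :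
    ((Nat.descFactorial a k : ℝ) / ((Nat.factorial k : ℝ) * (a : ℝ))) ^ ((1 : ℝ) / ((k : ℝ) - 1))
      ≤ ((a : ℝ) - 1) / 2 := by
  have ha : 2 ≤ a := le_trans hk hka
  set x : ℝ := (Nat.descFactorial a k : ℝ) / ((Nat.factorial k : ℝ) * (a : ℝ)) with hx
  set y : ℝ := ((a : ℝ) - 1) / 2 with hy
  have hxpos : 0 ≤ x := by positivity
  have hy0 : 0 ≤ y := by
    have : (1:ℝ) ≤ (a:ℝ) := by exact_mod_cast Nat.one_le_of_lt ha
    rw [hy]; linarith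
  have hcast : ((a - 1 : ℕ) : ℝ) = (a : ℝ) - 1 := by
    rw [Nat.cast_sub (by omega)]; simp
  have hkey : x ≤ y ^ (k - 1) := by
    rw [hx, hy, div_pow, div_le_div_iff₀ (by positivity) (by positivity)]
    rw [← hcast]
    have := key_nat a k hk hka
    push_cast
    calc (Nat.descFactorial a k : ℝ) * 2 ^ (k - 1)
        = 2 ^ (k - 1) * (Nat.descFactorial a k : ℝ) := by ring
      _ ≤ (Nat.factorial k : ℝ) * (a : ℝ) * ((a - 1 : ℕ) : ℝ) ^ (k - 1) := by
          exact_mod_cast this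
      _ = ((a - 1 : ℕ) : ℝ) ^ (k - 1) * ((Nat.factorial k : ℝ) * (a : ℝ)) := by ring
  have hke : ((k - 1 : ℕ) : ℝ) = (k : ℝ) - 1 := by
    rw [Nat.cast_sub (by omega)]; simp
  have hkpos : (0:ℝ) < (k : ℝ) - 1 := by
    have : (2:ℝ) ≤ (k : ℝ) := by exact_mod_cast hk
    linarith
  calc x ^ ((1 : ℝ) / ((k : ℝ) - 1))
      ≤ (y ^ (k - 1)) ^ ((1 : ℝ) / ((k : ℝ) - 1)) :=
        Real.rpow_le_rpow hxpos hkey (by positivity)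
    _ = y := by
        rw [← Real.rpow_natCast y (k - 1), ← Real.rpow_mul hy0, hke,
          mul_one_div, div_self (ne_of_gt hkpos), Real.rpow_one]
end

section
/- For 0 < d < D relatively prime integers and nonzero reals c1, c2, c3, the trinomial f(x) = c1 + c2*x^d + c3*x^D has a common complex root with its derivative f' in ℂ \ {0} if and only if D^D * c3^d * c1^{D−d} + (−1)^{D−1} * d^d * (D−d)^{D−d} * c2^D = 0. -/
open Polynomial

private lemma zpow_bezout {A B : ℂ} (hA : A ≠ 0) (p q a b : ℤ)
    (h : A ^ p = B ^ q) (hun : a * q + p * b = 1) : (A ^ a * B ^ b) ^ q = A := by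
  have h2 : B ^ (b * q) = A ^ (p * b) := by
    rw [mul_comm, zpow_mul, ← h, ← zpow_mul]
  rw [mul_zpow, ← zpow_mul, ← zpow_mul, h2, ← zpow_add₀ hA, hun, zpow_one]


theorem stmt_9 (d D : ℕ) (hd : 0 < d) (hdD : d < D) (hcop : Nat.Coprime d D)
    (c1 c2 c3 : ℝ) (hc1 : c1 ≠ 0) (hc2 : c2 ≠ 0) (hc3 : c3 ≠ 0) :
    let f : Polynomial ℂ := C (c1 : ℂ) + C (c2 : ℂ) * X ^ d + C (c3 : ℂ) * X ^ D
    (∃ z : ℂ, z ≠ 0 ∧ f.eval z = 0 ∧ (derivative f).eval z = 0) ↔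
      (D : ℝ) ^ D * c3 ^ d * c1 ^ (D - d) +
        (-1 : ℝ) ^ (D - 1) * (d : ℝ) ^ d * ((D : ℝ) - (d : ℝ)) ^ (D - d) * c2 ^ D = 0 := by
  intro f
  obtain ⟨m, rfl⟩ : ∃ m, d = m + 1 := ⟨d - 1, by omega⟩
  obtain ⟨e, he, rfl⟩ : ∃ e, 0 < e ∧ D = (m + 1) + e := ⟨D - (m+1), by omega, by omega⟩
  simp only [show m + 1 + e - (m + 1) = e from by omega,
    show m + 1 + e - 1 = m + e from by omega]
  have hdc : ((m : ℂ) + 1) ≠ 0 := by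
    have : (((m+1 : ℕ)) : ℂ) ≠ 0 := Nat.cast_ne_zero.2 (by omega)
    push_cast at this; exact this
  have hec : (e : ℂ) ≠ 0 := Nat.cast_ne_zero.2 he.ne'
  have hDc : ((m : ℂ) + 1 + e) ≠ 0 := by
    have : (((m+1+e : ℕ)) : ℂ) ≠ 0 := Nat.cast_ne_zero.2 (by omega)
    push_cast at this; exact this
  have hc1c : (c1 : ℂ) ≠ 0 := by exact_mod_cast hc1
  have hc2c : (c2 : ℂ) ≠ 0 := by exact_mod_cast hc2
  have hc3c : (c3 : ℂ) ≠ 0 := by exact_mod_cast hc3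
  constructor
  · rintro ⟨z, hz, hf, hf'⟩
    have hf0 : (c1 : ℂ) + c2 * z ^ (m+1) + c3 * z ^ (m+1+e) = 0 := by
      simpa [f] using hf
    have hf1 : ((m:ℂ)+1) * c2 * z ^ m + ((m:ℂ)+1+e) * c3 * z ^ (m + e) = 0 := by
      have h := hf'
      simp [f, derivative_add, derivative_C, derivative_X_pow,
        show m + 1 - 1 = m from by omega, show m + 1 + e - 1 = m + e from by omega] at h
      push_cast at h
      linear_combination h
    have hf2 : ((m:ℂ)+1) * c2 * z ^ (m+1) + ((m:ℂ)+1+e) * c3 * z ^ (m+1+e) = 0 := by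
      have h := congrArg (· * z) hf1
      simp only [add_mul, zero_mul] at h
      calc ((m:ℂ)+1) * c2 * z ^ (m+1) + ((m:ℂ)+1+e) * c3 * z ^ (m+1+e)
          = ((m:ℂ)+1) * c2 * z ^ m * z + ((m:ℂ)+1+e) * c3 * z ^ (m+e) * z := by ring
        _ = 0 := by linear_combination h
    have e1 : (e:ℂ) * c3 * z ^ (m+1+e) = ((m:ℂ)+1) * c1 := by
      linear_combination hf2 - ((m:ℂ)+1) * hf0
    have e2 : (e:ℂ) * c2 * z ^ (m+1) = -(((m:ℂ)+1+e) * c1) := by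
      linear_combination ((m:ℂ)+1+e) * hf0 - hf2
    -- make the coefficient sums opaque atoms
    obtain ⟨dd, hdd⟩ : ∃ dd : ℂ, ((m:ℂ)+1) = dd := ⟨_, rfl⟩
    obtain ⟨DD, hDD⟩ : ∃ DD : ℂ, ((m:ℂ)+1+e) = DD := ⟨_, rfl⟩
    rw [hdd] at e1 hdc
    rw [hDD] at e2 hDc
    have h1 : ((e:ℂ)*c3)^(m+1) * z^((m+1)*(m+1+e)) = (dd*c1)^(m+1) := by
      rw [Nat.mul_comm, pow_mul, ← mul_pow, e1]
    have h2 : ((e:ℂ)*c2)^(m+1+e) * z^((m+1)*(m+1+e)) = (-(DD*c1))^(m+1+e) := by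
      rw [pow_mul, ← mul_pow, e2]
    have key : ((e:ℂ)*c3)^(m+1) * (-(DD*c1))^(m+1+e)
        = (dd*c1)^(m+1) * ((e:ℂ)*c2)^(m+1+e) := by
      apply mul_right_cancel₀ (pow_ne_zero ((m+1)*(m+1+e)) hz)
      calc ((e:ℂ)*c3)^(m+1) * (-(DD*c1))^(m+1+e) * z^((m+1)*(m+1+e))
          = (((e:ℂ)*c3)^(m+1) * z^((m+1)*(m+1+e))) * (-(DD*c1))^(m+1+e) := by ring
        _ = (dd*c1)^(m+1) * (-(DD*c1))^(m+1+e) := by rw [h1]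
        _ = (dd*c1)^(m+1) * (((e:ℂ)*c2)^(m+1+e) * z^((m+1)*(m+1+e))) := by rw [h2]
        _ = (dd*c1)^(m+1) * ((e:ℂ)*c2)^(m+1+e) * z^((m+1)*(m+1+e)) := by ring
    rcases Nat.even_or_odd (m+e) with hpar | hpar
    · -- m+e even, so m+1+e odd
      have hDodd : Odd (m+1+e) := by
        rcases hpar with ⟨k, hk⟩; exact ⟨k, by omega⟩
      rw [hDodd.neg_pow] at key
      have T' : (DD ^ (m+1+e) * c3 ^ (m+1) * c1 ^ e + dd ^ (m+1) * (e:ℂ) ^ e * c2 ^ (m+1+e)) *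
          ((e:ℂ)^(m+1) * c1^(m+1)) = 0 * ((e:ℂ)^(m+1) * c1^(m+1)) := by
        linear_combination -key
      have T := mul_right_cancel₀ (mul_ne_zero (pow_ne_zero _ hec) (pow_ne_zero _ hc1c)) T'
      rw [← hdd, ← hDD] at T
      have hre : ((((m+1+e : ℕ) : ℝ) ^ (m+1+e) * c3 ^ (m+1) * c1 ^ e +
          (-1 : ℝ) ^ (m+e) * ((m+1 : ℕ) : ℝ) ^ (m+1) *
          (((m+1+e : ℕ):ℝ) - ((m+1:ℕ):ℝ)) ^ e * c2 ^ (m+1+e) : ℝ) : ℂ) = 0 := by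
        push_cast
        rw [hpar.neg_one_pow]
        linear_combination T
      exact_mod_cast hre
    · -- m+e odd, so m+1+e even
      have hDeven : Even (m+1+e) := by
        rcases hpar with ⟨k, hk⟩; exact ⟨k+1, by omega⟩
      rw [hDeven.neg_pow] at key
      have T' : (DD ^ (m+1+e) * c3 ^ (m+1) * c1 ^ e - dd ^ (m+1) * (e:ℂ) ^ e * c2 ^ (m+1+e)) *
          ((e:ℂ)^(m+1) * c1^(m+1)) = 0 * ((e:ℂ)^(m+1) * c1^(m+1)) := by
        linear_combination key
      have T := mul_right_cancel₀ (mul_ne_zero (pow_ne_zero _ hec) (pow_ne_zero _ hc1c)) T'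
      rw [← hdd, ← hDD] at T
      have hre : ((((m+1+e : ℕ) : ℝ) ^ (m+1+e) * c3 ^ (m+1) * c1 ^ e +
          (-1 : ℝ) ^ (m+e) * ((m+1 : ℕ) : ℝ) ^ (m+1) *
          (((m+1+e : ℕ):ℝ) - ((m+1:ℕ):ℝ)) ^ e * c2 ^ (m+1+e) : ℝ) : ℂ) = 0 := by
        push_cast
        rw [hpar.neg_one_pow]
        linear_combination T
      exact_mod_cast hre
  · intro hP
    have hPc : ((m:ℂ)+1+e) ^ (m+1+e) * c3 ^ (m+1) * c1 ^ e +
        (-1 : ℂ) ^ (m+e) * ((m:ℂ)+1) ^ (m+1) * (e:ℂ) ^ e * c2 ^ (m+1+e) = 0 := by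
      have h := congrArg (fun x : ℝ => (x : ℂ)) hP
      push_cast at h
      linear_combination h
    -- opaque atoms
    obtain ⟨dd, hdd⟩ : ∃ dd : ℂ, ((m:ℂ)+1) = dd := ⟨_, rfl⟩
    obtain ⟨DD, hDD⟩ : ∃ DD : ℂ, ((m:ℂ)+1+e) = DD := ⟨_, rfl⟩
    have hsum : dd + (e:ℂ) = DD := by rw [← hdd, ← hDD]
    rw [hdd] at hdc
    rw [hDD] at hDc
    rw [hDD, hdd] at hPc
    set A : ℂ := -(dd * c2) / (DD * c3) with hA_def
    set B : ℂ := dd * c1 / ((e:ℂ) * c3) with hB_def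
    have hA : A ≠ 0 := by
      rw [hA_def]
      exact div_ne_zero (neg_ne_zero.2 (mul_ne_zero hdc hc2c)) (mul_ne_zero hDc hc3c)
    have hB : B ≠ 0 := by
      rw [hB_def]
      exact div_ne_zero (mul_ne_zero hdc hc1c) (mul_ne_zero hec hc3c)
    have hR1 : A * (DD * c3) = -(dd * c2) := by
      rw [hA_def]; field_simp
    have hR2 : B * ((e:ℂ) * c3) = dd * c1 := by
      rw [hB_def]; field_simp
    -- key power relation A^(m+1+e) = B^e
    have hAB : A ^ (m+1+e) = B ^ e := by
      rw [hA_def, hB_def, div_pow, div_pow,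
        div_eq_div_iff (pow_ne_zero _ (mul_ne_zero hDc hc3c)) (pow_ne_zero _ (mul_ne_zero hec hc3c))]
      rcases Nat.even_or_odd (m+e) with hpar | hpar
      · have hDodd : Odd (m+1+e) := by rcases hpar with ⟨k, hk⟩; exact ⟨k, by omega⟩
        rw [hDodd.neg_pow]
        rw [hpar.neg_one_pow] at hPc
        linear_combination (-(dd^e * c3^e)) * hPc
      · have hDeven : Even (m+1+e) := by rcases hpar with ⟨k, hk⟩; exact ⟨k+1, by omega⟩
        rw [hDeven.neg_pow]
        rw [hpar.neg_one_pow] at hPc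
        linear_combination (-(dd^e * c3^e)) * hPc
    -- Bezout
    have hcop2 : Nat.Coprime e (m+1+e) := by
      have h' : Nat.Coprime (m+1) (e + (m+1)) := by rw [Nat.add_comm e (m+1)]; exact hcop
      have := (Nat.coprime_add_self_right.1 h').symm
      exact Nat.coprime_add_self_right.2 this
    obtain ⟨a, b, hbez⟩ : ∃ a b : ℤ, (e:ℤ) * a + ((m+1+e : ℕ):ℤ) * b = 1 := by
      refine ⟨Int.gcdA (e:ℤ) ((m+1+e:ℕ):ℤ), Int.gcdB (e:ℤ) ((m+1+e:ℕ):ℤ), ?_⟩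
      have h := (Int.gcd_eq_gcd_ab (e:ℤ) ((m+1+e:ℕ):ℤ)).symm
      rwa [show Int.gcd (e:ℤ) ((m+1+e:ℕ):ℤ) = 1 from by
        rw [Int.gcd_natCast_natCast]; exact hcop2, Int.ofNat_one] at h
    set z : ℂ := A ^ a * B ^ b with hz_def
    have hz : z ≠ 0 := mul_ne_zero (zpow_ne_zero _ hA) (zpow_ne_zero _ hB)
    have hABz : A ^ (((m+1+e:ℕ)):ℤ) = B ^ (((e:ℕ)):ℤ) := by
      rw [zpow_natCast, zpow_natCast]; exact hAB
    have hzE : z ^ ((e:ℕ):ℤ) = A := by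
      rw [hz_def]
      exact zpow_bezout hA ((m+1+e:ℕ):ℤ) ((e:ℕ):ℤ) a b hABz (by linear_combination hbez)
    have hzDE : z ^ (((m+1+e:ℕ)):ℤ) = B := by
      rw [hz_def, mul_comm]
      exact zpow_bezout hB ((e:ℕ):ℤ) ((m+1+e:ℕ):ℤ) b a hABz.symm (by linear_combination hbez)
    have hze : z ^ e = A := by
      have := hzE; rwa [zpow_natCast] at this
    have hzD : z ^ (m+1+e) = B := by
      have := hzDE; rwa [zpow_natCast] at this
    have hzd : z ^ (m+1) * A = B := by
      rw [← hze, ← pow_add, hzD]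
    refine ⟨z, hz, ?_, ?_⟩
    · -- f(z) = 0
      have key : ((c1:ℂ) + c2 * z ^ (m+1) + c3 * z ^ (m+1+e)) * (A * (e:ℂ) * c3 * DD) =
          0 * (A * (e:ℂ) * c3 * DD) := by
        linear_combination (c2 * (e:ℂ) * c3 * DD) * hzd + (c2 * DD + A * c3 * DD) * hR2 +
          ((c1:ℂ) * (e:ℂ) + dd * c1) * hR1 - dd * c1 * c2 * hsum +
          (c3 * A * (e:ℂ) * c3 * DD) * hzD
      have h0 := mul_right_cancel₀
        (mul_ne_zero (mul_ne_zero (mul_ne_zero hA hec) hc3c) hDc) key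
      simp only [f, eval_add, eval_mul, eval_pow, eval_C, eval_X]
      linear_combination h0
    · -- f'(z) = 0
      have hme : z ^ (m+e) = z ^ m * A := by rw [pow_add, hze]
      have h0 : dd * c2 * z ^ m + DD * c3 * z ^ (m+e) = 0 := by
        linear_combination (z ^ m) * hR1 + (DD * c3) * hme
      rw [← hdd, ← hDD] at h0
      simp [f, derivative_add, derivative_C, derivative_X_pow,
        show m + 1 - 1 = m from by omega, show m + 1 + e - 1 = m + e from by omega]
      push_cast
      linear_combination h0
end

section
/- For every integer D > 2, consider p0(x) = x^{2D} + x^{D+1} + x^D + 1 with p1 = p0'. Then the next Sturm sequence element p2 = −((D−1)/(2D)) * x^{D+1} − (1/2) * x^D − 1, and the quotient q3 of p1 divided by p2 has degree D−2 and exactly D−1 monomial terms; consequently p3 := q3*p2 − p1 has degree D and at least D+1 monomial terms. -/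
/-!
Euclidean division of `p0` by `p1 = 2D X^(2D-1) + (D+1) X^D + D X^(D-1)` leaves
`-p2 = ((D-1)/(2D)) X^(D+1) + X^D/2 + 1`. Write `p2 = a X^D (X - ρ) - 1` with `a = -(D-1)/(2D)`
and `a ρ = 1/2`, i.e. `ρ = -D/(D-1)`. Then `(X - ρ) ∑_{i<D-1} ρ^(D-2-i) X^i = X^(D-1) - ρ^(D-1)`
shows that the quotient of `p1` by `p2` is `(2D/a)` times this geometric sum, whose `D - 1`
coefficients are all nonzero; the remainder is that quotient plus
`(D + 1 + 2D ρ^(D-1)) X^D + D X^(D-1)`, so `p3` is dense of degree `D`, its leading coefficient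
being nonzero because `|ρ| > 1`.
-/

open Polynomial Finset

namespace Polynomial

theorem div_eq_and_mod_eq_of_eq_mul_add {K : Type*} [Field K] {p q a r : K[X]} (hq : q ≠ 0)
    (h : p = q * a + r) (hr : r.degree < q.degree) : p / q = a ∧ p % q = r := by
  have hmod : p % q = r := by
    rw [mod_eq_of_dvd_sub (p₂ := r) ⟨a, by rw [h]; ring⟩, (mod_eq_self_iff hq).2 hr]
  refine ⟨mul_left_cancel₀ hq ?_, hmod⟩
  linear_combination EuclideanDomain.div_add_mod p q - hmod + h

theorem div_mul_sub_self {K : Type*} [Field K] (p q : K[X]) : p / q * q - p = -(p % q) := by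
  linear_combination EuclideanDomain.div_add_mod p q

theorem natDegree_eq_of_support_eq_range {R : Type*} [Semiring R] {p : R[X]} {n : ℕ}
    (h : p.support = range (n + 1)) : p.natDegree = n := by
  have hp : p ≠ 0 := by
    rintro rfl
    simpa using congrArg (n ∈ ·) h
  refine le_antisymm ?_ (le_natDegree_of_mem_supp n (h ▸ self_mem_range_succ n))
  have := natDegree_mem_support_of_nonzero hp
  rw [h, mem_range] at this
  omega

theorem support_C_mul_X_pow_add_C_mul_X_pow_add {R : Type*} [Semiring R] {u v : R} (hu : u ≠ 0)
    (hv : v ≠ 0) {q : R[X]} {m : ℕ} (hq : q.support = range m) :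
    (C u * X ^ (m + 1) + C v * X ^ m + q).support = range (m + 2) := by
  ext k
  have hqk : q.coeff k ≠ 0 ↔ k < m := by rw [← mem_support_iff, hq, mem_range]
  simp only [mem_support_iff, coeff_add, coeff_C_mul_X_pow, mem_range]
  rcases lt_or_ge k m with h | h
  · simpa [h.ne, (h.trans (lt_add_one m)).ne, h.trans (by omega : m < m + 2)] using hqk.2 h
  · rw [not_ne_iff.1 (mt hqk.1 h.not_gt), add_zero]
    rcases h.eq_or_lt with rfl | h
    · simp [hv]
    · rcases (Nat.succ_le_of_lt h).eq_or_lt with rfl | h'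
      · simp [hu]
      · rw [if_neg h'.ne', if_neg h.ne', add_zero]
        exact iff_of_false (not_not.2 rfl) (by omega)

section GeomPoly

variable {R : Type*} [CommRing R]

noncomputable def geomPoly (ρ : R) (n : ℕ) : R[X] := ∑ i ∈ range n, X ^ i * C ρ ^ (n - 1 - i)

theorem geomPoly_mul_X_sub_C (ρ : R) (n : ℕ) : geomPoly ρ n * (X - C ρ) = X ^ n - C ρ ^ n :=
  geom_sum₂_mul X (C ρ) n

theorem coeff_geomPoly (ρ : R) (n k : ℕ) :
    (geomPoly ρ n).coeff k = if k < n then ρ ^ (n - 1 - k) else 0 := by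
  simp only [geomPoly, finsetSum_coeff, X_pow_mul, ← C_pow, coeff_C_mul_X_pow]
  simp [Finset.sum_ite_eq]

theorem natDegree_geomPoly_le (ρ : R) (n : ℕ) : (geomPoly ρ n).natDegree ≤ n - 1 :=
  natDegree_le_iff_coeff_eq_zero.2 fun k hk => by
    rw [coeff_geomPoly, if_neg (by omega)]

theorem support_C_mul_geomPoly [NoZeroDivisors R] {a ρ : R} (ha : a ≠ 0) (hρ : ρ ≠ 0) (n : ℕ) :
    (C a * geomPoly ρ n).support = range n := by
  ext k
  simp [coeff_C_mul, coeff_geomPoly, ha, pow_ne_zero _ hρ]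

end GeomPoly

end Polynomial

theorem add_one_add_two_mul_mul_pow_ne_zero {d ρ : ℝ} (hd : 1 < d) (hρ : 1 ≤ |ρ|) (k : ℕ) :
    d + 1 + 2 * d * ρ ^ k ≠ 0 := by
  intro h
  have hk : 1 ≤ |ρ ^ k| := by rw [abs_pow]; exact one_le_pow₀ hρ
  have h2 : |2 * d * ρ ^ k| = d + 1 := by
    rw [show 2 * d * ρ ^ k = -(d + 1) by linarith, abs_neg, abs_of_pos (by linarith)]
  rw [abs_mul, abs_of_pos (by linarith : 0 < 2 * d)] at h2
  nlinarith

theorem one_le_abs_neg_div_sub_one {d : ℝ} (hd : 1 < d) : 1 ≤ |-(d / (d - 1))| := by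
  rw [abs_neg, abs_of_pos (div_pos (by linarith) (by linarith)), one_le_div (by linarith)]
  linarith

noncomputable def tetranomial (R : Type*) [Semiring R] (D : ℕ) : R[X] :=
  X ^ (2 * D) + X ^ (D + 1) + X ^ D + 1

theorem derivative_tetranomial {R : Type*} [CommSemiring R] (D : ℕ) :
    derivative (tetranomial R D) =
      C (2 * (D : R)) * X ^ (2 * D - 1) + C ((D : R) + 1) * X ^ D + C (D : R) * X ^ (D - 1) := by
  simp only [tetranomial, derivative_add, derivative_X_pow, derivative_one, add_zero,
    Nat.add_sub_cancel]
  push_cast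
  ring

theorem neg_tetranomial_mod_derivative {D : ℕ} (hD : 2 < D) :
    -(tetranomial ℝ D % derivative (tetranomial ℝ D)) =
      C (-(((D : ℝ) - 1) / (2 * (D : ℝ)))) * X ^ (D + 1) + C (-(1 : ℝ) / 2) * X ^ D +
        C (-1 : ℝ) := by
  have hdeg : (derivative (tetranomial ℝ D)).natDegree = 2 * D - 1 := by
    rw [derivative_tetranomial]
    compute_degree!
    all_goals omega
  rw [neg_eq_iff_eq_neg]
  refine (div_eq_and_mod_eq_of_eq_mul_add (a := C (1 / (2 * (D : ℝ))) * X) ?_ ?_ ?_).2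
  · exact ne_zero_of_natDegree_gt (n := 0) (by omega)
  · obtain ⟨m, rfl⟩ : ∃ m, D = m + 1 := ⟨D - 1, by omega⟩
    refine Polynomial.funext fun x => ?_
    rw [derivative_tetranomial, tetranomial, show 2 * (m + 1) - 1 = 2 * m + 1 by omega,
      Nat.add_sub_cancel]
    simp only [eval_add, eval_mul, eval_pow, eval_X, eval_C, eval_one, eval_neg]
    field_simp
    ring
  · rw [degree_neg]
    refine degree_lt_degree (hdeg ▸ lt_of_le_of_lt (b := D + 1) ?_ (by omega))
    compute_degree

theorem derivative_tetranomial_div_mod {D : ℕ} (hD : 1 < D) :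
    derivative (tetranomial ℝ D) /
        (C (-(((D : ℝ) - 1) / (2 * (D : ℝ)))) * X ^ (D + 1) + C (-(1 : ℝ) / 2) * X ^ D +
          C (-1 : ℝ)) =
      C (-(4 * (D : ℝ) ^ 2 / ((D : ℝ) - 1))) * geomPoly (-((D : ℝ) / ((D : ℝ) - 1))) (D - 1) ∧
    derivative (tetranomial ℝ D) %
        (C (-(((D : ℝ) - 1) / (2 * (D : ℝ)))) * X ^ (D + 1) + C (-(1 : ℝ) / 2) * X ^ D +
          C (-1 : ℝ)) =
      C ((D : ℝ) + 1 + 2 * D * (-((D : ℝ) / ((D : ℝ) - 1))) ^ (D - 1)) * X ^ D +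
        C (D : ℝ) * X ^ (D - 1) +
        C (-(4 * (D : ℝ) ^ 2 / ((D : ℝ) - 1))) * geomPoly (-((D : ℝ) / ((D : ℝ) - 1))) (D - 1) := by
  obtain ⟨m, rfl⟩ : ∃ m, D = m + 2 := ⟨D - 2, by omega⟩
  rw [derivative_tetranomial, show 2 * (m + 2) - 1 = 2 * m + 3 by omega,
    show m + 2 - 1 = m + 1 from rfl]
  set d : ℝ := ((m + 2 : ℕ) : ℝ)
  have hd : 1 < d := by simp only [d]; norm_cast
  set a : ℝ := -((d - 1) / (2 * d)) with ha
  set ρ : ℝ := -(d / (d - 1)) with hρ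
  set A : ℝ := -(4 * d ^ 2 / (d - 1)) with hA
  have haρ : a * ρ = 1 / 2 := by
    rw [ha, hρ]; field_simp [show d - 1 ≠ 0 by linarith]
  have hAa : A * a = 2 * d := by
    rw [ha, hA]; field_simp [show d - 1 ≠ 0 by linarith]; ring
  have hdeg : (C a * X ^ (m + 2 + 1) + C (-(1 : ℝ) / 2) * X ^ (m + 2) + C (-1 : ℝ)).natDegree =
      m + 3 := by
    compute_degree!
    exact left_ne_zero_of_mul (by rw [haρ]; norm_num)
  refine div_eq_and_mod_eq_of_eq_mul_add (ne_zero_of_natDegree_gt (n := 0) (by omega)) ?_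
    (degree_lt_degree ?_)
  · refine Polynomial.funext fun x => ?_
    have hg := congrArg (eval x) (geomPoly_mul_X_sub_C ρ (m + 1))
    simp only [eval_mul, eval_sub, eval_X, eval_C, eval_pow] at hg
    simp only [eval_mul, eval_add, eval_X, eval_C, eval_pow]
    linear_combination (-A * a * x ^ (m + 2)) * hg -
      (x ^ (2 * m + 3) - ρ ^ (m + 1) * x ^ (m + 2)) * hAa -
      A * eval x (geomPoly ρ (m + 1)) * x ^ (m + 2) * haρ
  · rw [hdeg, Nat.lt_succ_iff]
    refine natDegree_add_le_of_degree_le ?_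
      ((natDegree_C_mul_le _ _).trans ((natDegree_geomPoly_le _ _).trans (by omega)))
    compute_degree

theorem stmt_10 (D : ℕ) (hD : 2 < D) :
    let p0 : Polynomial ℝ := X ^ (2 * D) + X ^ (D + 1) + X ^ D + 1
    let p1 : Polynomial ℝ := derivative p0
    let p2 : Polynomial ℝ := -(p0 % p1)
    let q3 : Polynomial ℝ := p1 / p2
    let p3 : Polynomial ℝ := q3 * p2 - p1
    p2 = C (-(((D : ℝ) - 1) / (2 * (D : ℝ)))) * X ^ (D + 1) +
        C (-(1 : ℝ) / 2) * X ^ D + C (-1 : ℝ) ∧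
    q3.natDegree = D - 2 ∧ q3.support.card = D - 1 ∧
    p3.natDegree = D ∧ D + 1 ≤ p3.support.card := by
  intro p0 p1 p2 q3 p3
  have hp2 : p2 = _ := neg_tetranomial_mod_derivative hD
  have hdiv := derivative_tetranomial_div_mod (by omega : 1 < D)
  rw [← hp2] at hdiv
  obtain ⟨hq3, hr⟩ : q3 = _ ∧ p1 % p2 = _ := hdiv
  have hp3 : p3 = -(p1 % p2) := div_mul_sub_self p1 p2
  obtain ⟨m, rfl⟩ : ∃ m, D = m + 2 := ⟨D - 2, by omega⟩
  have hd : (1 : ℝ) < ((m + 2 : ℕ) : ℝ) := by norm_cast; omega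
  have hρ := one_le_abs_neg_div_sub_one hd
  have hq3supp : q3.support = range (m + 1) := by
    rw [hq3]
    exact support_C_mul_geomPoly (neg_ne_zero.2 (div_pos (by positivity) (by linarith)).ne') (abs_pos.1 (one_pos.trans_le hρ)) (m + 1)
  have hp3supp : p3.support = range (m + 3) := by
    rw [hp3, hr, support_neg, ← hq3]
    exact support_C_mul_X_pow_add_C_mul_X_pow_add (add_one_add_two_mul_mul_pow_ne_zero hd hρ _)
      (by positivity) hq3supp
  exact ⟨hp2, natDegree_eq_of_support_eq_range hq3supp, by simp [hq3supp],
    natDegree_eq_of_support_eq_range hp3supp, by simp [hp3supp]⟩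
end

section
/- Let f1, f2 : (0,R) → ℝ be analytic, convex, both monotonically increasing (or both decreasing), each satisfying x*γ(f_i, x) ≤ ᾱ_i for all x in a given closed subinterval. Then for g := f1 + f2, wherever g' ≠ 0, x*γ(g, x) ≤ max{ᾱ1, ᾱ2} on that subinterval. -/
/-- Smale's gamma invariant:
`γ(f,x) = sup_{k ≥ 2} |f⁽ᵏ⁾(x) / (k! f'(x))|^(1/(k-1))`. -/
noncomputable def smaleGamma (f : ℝ → ℝ) (x : ℝ) : ℝ :=
  sSup {y : ℝ | ∃ k : ℕ, 2 ≤ k ∧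
    y = |iteratedDeriv k f x / ((Nat.factorial k : ℝ) * deriv f x)| ^ ((1 : ℝ) / ((k : ℝ) - 1))}

/-!
Clearing denominators, `γ(f, x) ≤ c` says `|f⁽ᵏ⁾(x)| ≤ k! |f'(x)| c^(k-1)` for all `k ≥ 2`, and
in this form the bound is additive: higher derivatives of `f₁ + f₂` obey the triangle inequality,
while `|(f₁ + f₂)'| = |f₁'| + |f₂'|` since `f₁'` and `f₂'` have the same sign. Analyticity keeps
the supremum defining `γ` finite (Cauchy estimates). Where `f'(x) = 0` the quotients defining
`γ(f, x)` are `0` by convention; there convexity makes `f'` monotone, so together with its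
constant sign `f'` vanishes on one side of `x`, hence near `x` by analyticity, and all
derivatives of `f` vanish at `x`.
-/

open Set Filter Topology
open scoped Nat ContDiff

noncomputable def smaleGammaTerm (f : ℝ → ℝ) (x : ℝ) (k : ℕ) : ℝ :=
  |iteratedDeriv k f x / ((k ! : ℝ) * deriv f x)| ^ ((1 : ℝ) / ((k : ℝ) - 1))

def HasGammaBound (f : ℝ → ℝ) (x c : ℝ) : Prop :=
  ∀ k, 2 ≤ k → |iteratedDeriv k f x| ≤ k ! * |deriv f x| * c ^ (k - 1)

section SmaleGamma

variable {f : ℝ → ℝ} {x c : ℝ} {k : ℕ}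

lemma smaleGammaTerm_le_iff (hc : 0 ≤ c) (hk : 2 ≤ k) :
    smaleGammaTerm f x k ≤ c ↔ |iteratedDeriv k f x / ((k ! : ℝ) * deriv f x)| ≤ c ^ (k - 1) := by
  have hk' : (0 : ℝ) < (k : ℝ) - 1 := by
    have : (2 : ℝ) ≤ k := by exact_mod_cast hk
    linarith
  rw [smaleGammaTerm, one_div, Real.rpow_inv_le_iff_of_pos (abs_nonneg _) hc hk',
    ← Real.rpow_natCast, Nat.cast_sub (by omega : 1 ≤ k), Nat.cast_one]

lemma mul_pow_le_mul_sq_pow_pred {D s : ℝ} (hD : 1 ≤ D) (hs : 1 ≤ s) (hk : 2 ≤ k) :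
    D * s ^ k ≤ (D * s ^ 2) ^ (k - 1) := by
  rw [mul_pow, ← pow_mul]
  gcongr
  · exact le_self_pow₀ hD (by omega)
  · omega

lemma bddAbove_smaleGammaTerm (hf : AnalyticAt ℝ f x) :
    BddAbove {y | ∃ k, 2 ≤ k ∧ y = smaleGammaTerm f x k} := by
  have hp := hf.hasFPowerSeriesAt
  obtain ⟨C, r, -, hr, hCr⟩ := FormalMultilinearSeries.le_mul_pow_of_radius_pos _ hp.radius_pos
  set D := max 1 (C / |deriv f x|)
  set s := max 1 r
  refine ⟨D * s ^ 2, ?_⟩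
  rintro y ⟨k, hk, rfl⟩
  rw [smaleGammaTerm_le_iff (by positivity) hk]
  have hcoeff : |iteratedDeriv k f x / k !| ≤ C * r ^ k := by
    simpa only [FormalMultilinearSeries.ofScalars_norm, Real.norm_eq_abs] using hCr k
  calc |iteratedDeriv k f x / ((k ! : ℝ) * deriv f x)|
      = |iteratedDeriv k f x / k !| / |deriv f x| := by rw [← div_div, abs_div]
    _ ≤ C * r ^ k / |deriv f x| := by gcongr
    _ = C / |deriv f x| * r ^ k := by ring
    _ ≤ D * s ^ k := by gcongr <;> exact le_max_right _ _
    _ ≤ (D * s ^ 2) ^ (k - 1) :=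
      mul_pow_le_mul_sq_pow_pred (le_max_left _ _) (le_max_left _ _) hk

lemma smaleGammaTerm_le_smaleGamma (hf : AnalyticAt ℝ f x) (hk : 2 ≤ k) :
    smaleGammaTerm f x k ≤ smaleGamma f x :=
  le_csSup (bddAbove_smaleGammaTerm hf) ⟨k, hk, rfl⟩

lemma smaleGamma_nonneg : 0 ≤ smaleGamma f x :=
  Real.sSup_nonneg fun _ ⟨_, _, hy⟩ => hy ▸ Real.rpow_nonneg (abs_nonneg _) _

lemma HasGammaBound.smaleGamma_le (h : HasGammaBound f x c) (hc : 0 ≤ c) :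
    smaleGamma f x ≤ c := by
  refine Real.sSup_le ?_ hc
  rintro y ⟨k, hk, rfl⟩
  change smaleGammaTerm f x k ≤ c
  rw [smaleGammaTerm_le_iff hc hk, abs_div, abs_mul, Nat.abs_cast]
  rcases eq_or_ne (deriv f x) 0 with hd | hd
  · simp only [hd, abs_zero, mul_zero, div_zero]
    positivity
  · rw [div_le_iff₀ (by positivity)]
    linarith [h k hk]

lemma HasGammaBound.of_smaleGamma_le (hf : AnalyticAt ℝ f x) (hd : deriv f x ≠ 0)
    (h : smaleGamma f x ≤ c) : HasGammaBound f x c := by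
  intro k hk
  have hterm := (smaleGammaTerm_le_iff (smaleGamma_nonneg.trans h) hk).1
    ((smaleGammaTerm_le_smaleGamma hf hk).trans h)
  rw [abs_div, abs_mul, Nat.abs_cast, div_le_iff₀ (by positivity)] at hterm
  linarith

end SmaleGamma

lemma HasGammaBound.add {f₁ f₂ : ℝ → ℝ} {x c : ℝ} (h₁ : HasGammaBound f₁ x c)
    (h₂ : HasGammaBound f₂ x c) (hf₁ : ContDiffAt ℝ ∞ f₁ x) (hf₂ : ContDiffAt ℝ ∞ f₂ x)
    (hsign : 0 ≤ deriv f₁ x ∧ 0 ≤ deriv f₂ x ∨ deriv f₁ x ≤ 0 ∧ deriv f₂ x ≤ 0) :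
    HasGammaBound (fun y => f₁ y + f₂ y) x c := by
  intro k hk
  have hderiv : |deriv (fun y => f₁ y + f₂ y) x| = |deriv f₁ x| + |deriv f₂ x| := by
    rw [deriv_fun_add (hf₁.differentiableAt (by simp)) (hf₂.differentiableAt (by simp)),
      abs_add_eq_add_abs_iff]
    exact hsign
  calc |iteratedDeriv k (fun y => f₁ y + f₂ y) x|
      = |iteratedDeriv k f₁ x + iteratedDeriv k f₂ x| := by
        rw [iteratedDeriv_fun_add (hf₁.of_le (by exact_mod_cast le_top))
          (hf₂.of_le (by exact_mod_cast le_top))]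
    _ ≤ |iteratedDeriv k f₁ x| + |iteratedDeriv k f₂ x| := abs_add_le _ _
    _ ≤ k ! * |deriv f₁ x| * c ^ (k - 1) + k ! * |deriv f₂ x| * c ^ (k - 1) :=
        add_le_add (h₁ k hk) (h₂ k hk)
    _ = k ! * |deriv (fun y => f₁ y + f₂ y) x| * c ^ (k - 1) := by rw [hderiv]; ring

lemma MonotoneOn.deriv_nonneg_of_mem_nhds {f : ℝ → ℝ} {s : Set ℝ} {x : ℝ}
    (hf : MonotoneOn f s) (hs : s ∈ 𝓝 x) : 0 ≤ deriv f x := by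
  rw [← derivWithin_of_mem_nhds hs]
  exact hf.derivWithin_nonneg

lemma AntitoneOn.deriv_nonpos_of_mem_nhds {f : ℝ → ℝ} {s : Set ℝ} {x : ℝ}
    (hf : AntitoneOn f s) (hs : s ∈ 𝓝 x) : deriv f x ≤ 0 := by
  rw [← derivWithin_of_mem_nhds hs]
  exact hf.derivWithin_nonpos

lemma iteratedDeriv_eq_zero_of_frequently_deriv_eq_zero {𝕜 F : Type*} [NontriviallyNormedField 𝕜]
    [NormedAddCommGroup F] [NormedSpace 𝕜 F] {f : 𝕜 → F} {x : 𝕜} {k : ℕ}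
    (hf : AnalyticAt 𝕜 (deriv f) x) (h : ∃ᶠ z in 𝓝[≠] x, deriv f z = 0) (hk : 1 ≤ k) :
    iteratedDeriv k f x = 0 := by
  have hzero : deriv f =ᶠ[𝓝 x] fun _ => 0 := hf.frequently_zero_iff_eventually_zero.1 h
  obtain ⟨m, rfl⟩ := Nat.exists_eq_add_of_le' hk
  rw [iteratedDeriv_succ', hzero.iteratedDeriv_eq m, iteratedDeriv_const, ite_self]

section ConvexOn

variable {f : ℝ → ℝ} {l r x : ℝ}

lemma ConvexOn.frequently_deriv_eq_zero (hf : AnalyticOnNhd ℝ f (Ioo l r))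
    (hc : ConvexOn ℝ (Ioo l r) f) (hm : MonotoneOn f (Ioo l r) ∨ AntitoneOn f (Ioo l r))
    (hx : x ∈ Ioo l r) (hd : deriv f x = 0) : ∃ᶠ z in 𝓝[≠] x, deriv f z = 0 := by
  have hmono : MonotoneOn (deriv f) (Ioo l r) :=
    hc.monotoneOn_deriv fun y hy => (hf y hy).differentiableAt
  rcases hm with hm | hm
  · have hleft : ∀ z ∈ Ioo l x, deriv f z = 0 := fun z hz => by
      have hz' : z ∈ Ioo l r := ⟨hz.1, hz.2.trans hx.2⟩
      exact le_antisymm (hd ▸ hmono hz' hx hz.2.le)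
        (hm.deriv_nonneg_of_mem_nhds (isOpen_Ioo.mem_nhds hz'))
    exact (eventually_of_mem (Ioo_mem_nhdsLT hx.1) hleft).frequently.filter_mono
      (nhdsWithin_mono x fun y hy => ne_of_lt hy)
  · have hright : ∀ z ∈ Ioo x r, deriv f z = 0 := fun z hz => by
      have hz' : z ∈ Ioo l r := ⟨hx.1.trans hz.1, hz.2⟩
      exact le_antisymm (hm.deriv_nonpos_of_mem_nhds (isOpen_Ioo.mem_nhds hz'))
        (hd ▸ hmono hx hz' hz.1.le)
    exact (eventually_of_mem (Ioo_mem_nhdsGT hx.2) hright).frequently.filter_mono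
      (nhdsWithin_mono x fun y hy => ne_of_gt hy)

lemma HasGammaBound.of_convexOn (hf : AnalyticOnNhd ℝ f (Ioo l r))
    (hc : ConvexOn ℝ (Ioo l r) f) (hm : MonotoneOn f (Ioo l r) ∨ AntitoneOn f (Ioo l r))
    (hx : x ∈ Ioo l r) {c : ℝ} (h : smaleGamma f x ≤ c) : HasGammaBound f x c := by
  rcases ne_or_eq (deriv f x) 0 with hd | hd
  · exact .of_smaleGamma_le (hf x hx) hd h
  · intro k hk
    rw [iteratedDeriv_eq_zero_of_frequently_deriv_eq_zero (hf.deriv x hx)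
      (hc.frequently_deriv_eq_zero hf hm hx hd) (by omega), abs_zero]
    have hc : 0 ≤ c := smaleGamma_nonneg.trans h
    positivity

end ConvexOn

theorem stmt_19_general (R : ℝ) (f1 f2 : ℝ → ℝ)
    (hf1 : AnalyticOnNhd ℝ f1 (Set.Ioo 0 R)) (hf2 : AnalyticOnNhd ℝ f2 (Set.Ioo 0 R))
    (hc1 : ConvexOn ℝ (Set.Ioo 0 R) f1) (hc2 : ConvexOn ℝ (Set.Ioo 0 R) f2)
    (hmono : (MonotoneOn f1 (Set.Ioo 0 R) ∧ MonotoneOn f2 (Set.Ioo 0 R)) ∨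
             (AntitoneOn f1 (Set.Ioo 0 R) ∧ AntitoneOn f2 (Set.Ioo 0 R)))
    (a b : ℝ) (hab : Set.Icc a b ⊆ Set.Ioo 0 R)
    (α1 α2 : ℝ)
    (hγ1 : ∀ x ∈ Set.Icc a b, x * smaleGamma f1 x ≤ α1)
    (hγ2 : ∀ x ∈ Set.Icc a b, x * smaleGamma f2 x ≤ α2) :
    ∀ x ∈ Set.Icc a b, deriv (fun y => f1 y + f2 y) x ≠ 0 →
      x * smaleGamma (fun y => f1 y + f2 y) x ≤ max α1 α2 := by
  intro x hx _
  have hx' := hab hx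
  have hx0 : 0 < x := hx'.1
  have hγ1' : smaleGamma f1 x ≤ max α1 α2 / x :=
    (le_div_iff₀' hx0).2 ((hγ1 x hx).trans (le_max_left _ _))
  have hγ2' : smaleGamma f2 x ≤ max α1 α2 / x :=
    (le_div_iff₀' hx0).2 ((hγ2 x hx).trans (le_max_right _ _))
  have hsign : 0 ≤ deriv f1 x ∧ 0 ≤ deriv f2 x ∨ deriv f1 x ≤ 0 ∧ deriv f2 x ≤ 0 := by
    have hnhds := isOpen_Ioo.mem_nhds hx'
    exact hmono.imp
      (fun h => ⟨h.1.deriv_nonneg_of_mem_nhds hnhds, h.2.deriv_nonneg_of_mem_nhds hnhds⟩)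
      (fun h => ⟨h.1.deriv_nonpos_of_mem_nhds hnhds, h.2.deriv_nonpos_of_mem_nhds hnhds⟩)
  have hbound : HasGammaBound (fun y => f1 y + f2 y) x (max α1 α2 / x) :=
    (HasGammaBound.of_convexOn hf1 hc1 (hmono.imp And.left And.left) hx' hγ1').add
      (.of_convexOn hf2 hc2 (hmono.imp And.right And.right) hx' hγ2')
      (hf1 x hx').contDiffAt (hf2 x hx').contDiffAt hsign
  rw [← le_div_iff₀' hx0]
  exact hbound.smaleGamma_le (smaleGamma_nonneg.trans hγ1')

theorem stmt_19 (R : ℝ) (hR : 0 < R) (f1 f2 : ℝ → ℝ)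
    (hf1 : AnalyticOnNhd ℝ f1 (Set.Ioo 0 R)) (hf2 : AnalyticOnNhd ℝ f2 (Set.Ioo 0 R))
    (hc1 : ConvexOn ℝ (Set.Ioo 0 R) f1) (hc2 : ConvexOn ℝ (Set.Ioo 0 R) f2)
    (hmono : (MonotoneOn f1 (Set.Ioo 0 R) ∧ MonotoneOn f2 (Set.Ioo 0 R)) ∨
             (AntitoneOn f1 (Set.Ioo 0 R) ∧ AntitoneOn f2 (Set.Ioo 0 R)))
    (a b : ℝ) (hab : Set.Icc a b ⊆ Set.Ioo 0 R)
    (α1 α2 : ℝ)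
    (hγ1 : ∀ x ∈ Set.Icc a b, x * smaleGamma f1 x ≤ α1)
    (hγ2 : ∀ x ∈ Set.Icc a b, x * smaleGamma f2 x ≤ α2) :
    ∀ x ∈ Set.Icc a b, deriv (fun y => f1 y + f2 y) x ≠ 0 →
      x * smaleGamma (fun y => f1 y + f2 y) x ≤ max α1 α2 :=
  stmt_19_general R f1 f2 hf1 hf2 hc1 hc2 hmono a b hab α1 α2 hγ1 hγ2
end
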